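/- arXiv:2402.07494 — 8 statements merged into one kernel-verified Lean document; each statement's English description precedes it below -/
import Mathlib

section
/- The intersection of two semilinear subsets of ℕ^d is semilinear. -/
/-!
The two notions are Mathlib's `IsLinearSet` and `IsSemilinearSet` on `Fin d → ℕ`, with the
generators listed explicitly, so the theorem is `IsSemilinearSet.inter` (Ginsburg–Spanier): the
intersection of two linear sets `c₁ + ⟨P⟩` and `c₂ + ⟨Q⟩` is the image of the solution set of
`c₁ + P λ = c₂ + Q μ`, and by Dickson's lemma such a solution set is a finite union of translates
of the monoid of homogeneous solutions, which is finitely generated.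
-/

/-- A subset of `ℕ^d` is linear if it has the form `{c + Σ λᵢ pᵢ}`. -/
def IsLinearSet' {d : ℕ} (L : Set (Fin d → ℕ)) : Prop :=
  ∃ (c : Fin d → ℕ) (m : ℕ) (p : Fin m → Fin d → ℕ),
    L = {x | ∃ lam : Fin m → ℕ, x = c + ∑ i, lam i • p i}

/-- A semilinear set is a finite union of linear sets. -/
def IsSemilinearSet' {d : ℕ} (L : Set (Fin d → ℕ)) : Prop :=
  ∃ (n : ℕ) (Ls : Fin n → Set (Fin d → ℕ)),
    (∀ i, IsLinearSet' (Ls i)) ∧ L = ⋃ i, Ls i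

open Set Pointwise

theorem setOf_eq_vadd_closure_range {d m : ℕ} (c : Fin d → ℕ) (p : Fin m → Fin d → ℕ) :
    {x | ∃ lam : Fin m → ℕ, x = c + ∑ i, lam i • p i} =
      c +ᵥ (AddSubmonoid.closure (range p) : Set (Fin d → ℕ)) := by
  ext x
  simp only [mem_vadd_set, SetLike.mem_coe, AddSubmonoid.mem_closure_range_iff_of_fintype,
    vadd_eq_add, mem_ofPred_eq]
  constructor
  · rintro ⟨lam, rfl⟩
    exact ⟨_, ⟨lam, rfl⟩, rfl⟩
  · rintro ⟨_, ⟨lam, rfl⟩, rfl⟩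
    exact ⟨lam, rfl⟩

theorem isLinearSet'_iff {d : ℕ} {L : Set (Fin d → ℕ)} : IsLinearSet' L ↔ IsLinearSet L := by
  constructor
  · rintro ⟨c, m, p, rfl⟩
    exact ⟨c, range p, finite_range p, setOf_eq_vadd_closure_range c p⟩
  · rintro ⟨c, t, ht, rfl⟩
    obtain ⟨m, p, rfl⟩ := ht.fin_embedding
    exact ⟨c, m, p, (setOf_eq_vadd_closure_range c p).symm⟩

theorem isSemilinearSet'_iff {d : ℕ} {L : Set (Fin d → ℕ)} :
    IsSemilinearSet' L ↔ IsSemilinearSet L := by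
  constructor
  · rintro ⟨n, Ls, hLs, rfl⟩
    exact .iUnion fun i => (isLinearSet'_iff.mp (hLs i)).isSemilinearSet
  · rintro ⟨S, hS, hlin, rfl⟩
    obtain ⟨n, Ls, rfl⟩ := hS.fin_embedding
    exact ⟨n, Ls, fun i => isLinearSet'_iff.mpr (hlin _ (mem_range_self i)), sUnion_range Ls⟩

theorem inter_semilinear {d : ℕ} {L₁ L₂ : Set (Fin d → ℕ)}
    (h₁ : IsSemilinearSet' L₁) (h₂ : IsSemilinearSet' L₂) :
    IsSemilinearSet' (L₁ ∩ L₂) :=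
  isSemilinearSet'_iff.mpr <| (isSemilinearSet'_iff.mp h₁).inter (isSemilinearSet'_iff.mp h₂)
end

section
/- With D the quaternion algebra over F_q(t) with Z² = c, F² = t(t−1), ZF = −FZ, for ξ ∈ F_q[Z]* and p = char(F_q), k ≥ 1: (ξFZ)^(p^k) = (−c·N(ξ))^((p^k−1)/2) · (t(t−1))^((p^k−1)/2) · ξFZ. -/
open Quaternion

/-! The element `w = ξFZ` is a pure quaternion in the span of `F` and `ZF`, so `w² = -c N(ξ) t(t-1)`
is a central scalar; since `p ^ k` is odd, `w ^ (p ^ k) = (w²) ^ ((p ^ k - 1) / 2) * w`. -/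

theorem pow_eq_sq_pow_mul_of_odd {M : Type*} [Monoid M] (w : M) {n : ℕ} (hn : Odd n) :
    w ^ n = (w ^ 2) ^ ((n - 1) / 2) * w := by
  obtain ⟨m, rfl⟩ := hn
  rw [show (2 * m + 1 - 1) / 2 = m by omega, ← pow_mul, pow_succ]

namespace QuaternionAlgebra

variable {R : Type*} [CommRing R] {a b : R}

theorem sq_of_re_eq_zero_of_imI_eq_zero {w : ℍ[R, a, b]} (hre : w.re = 0) (hI : w.imI = 0) :
    w ^ 2 = ↑(b * (w.imJ ^ 2 - a * w.imK ^ 2)) := by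
  ext <;> simp [sq, hre, hI] <;> ring

theorem sq_coe_add_coe_mul_i_mul_j_mul_i (x y : R) :
    (((x : ℍ[R, a, b]) + y * ⟨0, 1, 0, 0⟩) * (⟨0, 0, 1, 0⟩ * ⟨0, 1, 0, 0⟩)) ^ 2
      = ↑(-(a * (x ^ 2 - a * y ^ 2)) * b) := by
  have hw : ((x : ℍ[R, a, b]) + y * ⟨0, 1, 0, 0⟩) * (⟨0, 0, 1, 0⟩ * ⟨0, 1, 0, 0⟩)
      = ⟨0, 0, -(a * y), -x⟩ := by
    ext <;> simp
  rw [hw, sq_of_re_eq_zero_of_imI_eq_zero rfl rfl]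
  congr 1
  ring

end QuaternionAlgebra

theorem xiFZ_pow_p_pow_general {Fq : Type*} [Field Fq] (p : ℕ) [Fact p.Prime]
    (hp : p ≠ 2) (c : Fq) (k : ℕ)
    (x y : Fq) :
    let K := RatFunc Fq
    let t : K := RatFunc.X
    let cK : K := algebraMap Fq K c
    let Z : ℍ[K, cK, t * (t - 1)] := ⟨0, 1, 0, 0⟩
    let F : ℍ[K, cK, t * (t - 1)] := ⟨0, 0, 1, 0⟩
    -- ξ = x + y·Z ∈ F_q[Z]*, with norm N(ξ) = x² - c·y²
    let ξ : ℍ[K, cK, t * (t - 1)] :=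
      algebraMap K _ (algebraMap Fq K x) + algebraMap K _ (algebraMap Fq K y) * Z
    (ξ * (F * Z)) ^ (p ^ k)
      = algebraMap K ℍ[K, cK, t * (t - 1)]
          (algebraMap Fq K ((-(c * (x ^ 2 - c * y ^ 2))) ^ ((p ^ k - 1) / 2))
            * (t * (t - 1)) ^ ((p ^ k - 1) / 2))
        * (ξ * (F * Z)) := by
  intro K t cK Z F ξ
  have hodd : Odd (p ^ k) := ((Fact.out : p.Prime).odd_of_ne_two hp).pow
  have hsq : (ξ * (F * Z)) ^ 2
      = algebraMap K _ (algebraMap Fq K (-(c * (x ^ 2 - c * y ^ 2))) * (t * (t - 1))) := by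
    simpa [ξ, Z, F, cK, map_sub, map_mul, map_pow] using
      QuaternionAlgebra.sq_coe_add_coe_mul_i_mul_j_mul_i (a := cK) (b := t * (t - 1))
        (algebraMap Fq K x) (algebraMap Fq K y)
  rw [pow_eq_sq_pow_mul_of_odd _ hodd, hsq, ← map_pow, mul_pow, ← map_pow]

theorem xiFZ_pow_p_pow {Fq : Type*} [Field Fq] [Fintype Fq] (p : ℕ) [Fact p.Prime]
    (hp : p ≠ 2) [CharP Fq p] (c : Fq) (hc : ¬ IsSquare c) (k : ℕ) (hk : 1 ≤ k)
    (x y : Fq) (hxy : ¬(x = 0 ∧ y = 0)) :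
    let K := RatFunc Fq
    let t : K := RatFunc.X
    let cK : K := algebraMap Fq K c
    let Z : ℍ[K, cK, t * (t - 1)] := ⟨0, 1, 0, 0⟩
    let F : ℍ[K, cK, t * (t - 1)] := ⟨0, 0, 1, 0⟩
    -- ξ = x + y·Z ∈ F_q[Z]*, with norm N(ξ) = x² - c·y²
    let ξ : ℍ[K, cK, t * (t - 1)] :=
      algebraMap K _ (algebraMap Fq K x) + algebraMap K _ (algebraMap Fq K y) * Z
    (ξ * (F * Z)) ^ (p ^ k)
      = algebraMap K ℍ[K, cK, t * (t - 1)]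
          (algebraMap Fq K ((-(c * (x ^ 2 - c * y ^ 2))) ^ ((p ^ k - 1) / 2))
            * (t * (t - 1)) ^ ((p ^ k - 1) / 2))
        * (ξ * (F * Z)) :=
  xiFZ_pow_p_pow_general p hp c k x y
end

section
/- In the quaternion algebra D over K = F_q(t) with Z² = c, F² = t(t−1), ZF = −FZ, for ξ ∈ F_q[Z] and f(t) ∈ K*, the p^k-th power of cf(t) + ξFZ equals, modulo K*, the element c·g(t) + ξ'FZ where ξ' = (−c)^((1−p^k)/2)·N(ξ)^((p^k−1)/2)·ξ and g(t) = f(t)^(p^k)/(t(t−1))^((p^k−1)/2). -/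
/-!
Write `w = ξ F Z`. It is a pure quaternion in the span of `F` and `ZF`, so its square is the
scalar `-c t (t - 1) N(ξ)`. As `w` commutes with `K`, the Frobenius gives
`(c f + w) ^ p^k = (c f) ^ p^k + w ^ p^k`, and `w ^ (2m + 1) = (w²) ^ m w` with `p^k = 2m + 1`.
Multiplying `c g + ξ' F Z` by `u = c^(2m) (t (t - 1))^m` produces exactly these two terms.
-/

open Quaternion

namespace QuaternionAlgebra

variable {R : Type*} [CommRing R] {c₁ c₂ : R}

theorem mul_self_mk_zero_zero (u v : R) :
    (⟨0, 0, u, v⟩ : ℍ[R, c₁, c₂]) * ⟨0, 0, u, v⟩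
      = algebraMap R _ (c₂ * u ^ 2 - c₁ * c₂ * v ^ 2) := by
  ext <;> simp [algebraMap_eq] <;> ring

theorem algebraMap_add_algebraMap_mul_i_mul_ji (x y : R) :
    (algebraMap R ℍ[R, c₁, c₂] x + algebraMap R _ y * ⟨0, 1, 0, 0⟩)
        * (⟨0, 0, 1, 0⟩ * ⟨0, 1, 0, 0⟩) = ⟨0, 0, -(c₁ * y), -x⟩ := by
  ext <;> simp [algebraMap_eq]

theorem mul_self_algebraMap_add_algebraMap_mul_i_mul_ji (x y : R) :
    ((algebraMap R ℍ[R, c₁, c₂] x + algebraMap R _ y * ⟨0, 1, 0, 0⟩)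
        * (⟨0, 0, 1, 0⟩ * ⟨0, 1, 0, 0⟩))
      * ((algebraMap R _ x + algebraMap R _ y * ⟨0, 1, 0, 0⟩) * (⟨0, 0, 1, 0⟩ * ⟨0, 1, 0, 0⟩))
      = algebraMap R _ (-(c₁ * c₂ * (x ^ 2 - c₁ * y ^ 2))) := by
  rw [algebraMap_add_algebraMap_mul_i_mul_ji, mul_self_mk_zero_zero]
  ring_nf

end QuaternionAlgebra

theorem pow_two_mul_add_one_of_mul_self_eq_algebraMap {K A : Type*} [CommSemiring K] [Semiring A]
    [Algebra K A] {w : A} {r : K} (hw : w * w = algebraMap K A r) (m : ℕ) :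
    w ^ (2 * m + 1) = algebraMap K A (r ^ m) * w := by
  rw [pow_succ, pow_mul, sq, hw, map_pow]

theorem add_pow_char_pow_of_mul_self_eq_algebraMap {K A : Type*} [CommSemiring K] [Ring A]
    [Algebra K A] (p : ℕ) [Fact p.Prime] [CharP A p] {k m : ℕ} (hm : p ^ k = 2 * m + 1)
    (a : K) {w : A} {r : K} (hw : w * w = algebraMap K A r) :
    (algebraMap K A a + w) ^ p ^ k = algebraMap K A (a ^ p ^ k) + algebraMap K A (r ^ m) * w := by
  rw [add_pow_char_pow_of_commute p k (Algebra.commutes a w), map_pow, hm,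
    pow_two_mul_add_one_of_mul_self_eq_algebraMap hw]

theorem pow_two_mul_mul_pow_mul_mul_div_pow {K : Type*} [Field K] (c f : K) {b : K} (hb : b ≠ 0)
    (m : ℕ) : c ^ (2 * m) * b ^ m * (c * (f ^ (2 * m + 1) / b ^ m)) = (c * f) ^ (2 * m + 1) := by
  field_simp
  ring

theorem pow_two_mul_mul_pow_mul_inv_neg_pow_mul_pow {K : Type*} [Field K] (c b N : K) (m : ℕ) :
    c ^ (2 * m) * b ^ m * (((-c) ^ m)⁻¹ * N ^ m) = (-(c * b * N)) ^ m := by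
  rw [pow_mul, ← neg_sq c, ← pow_mul, pow_mul']
  field_simp
  ring

theorem RatFunc.X_mul_X_sub_one_ne_zero {F : Type*} [Field F] :
    (RatFunc.X : RatFunc F) * (RatFunc.X - 1) ≠ 0 := by
  refine mul_ne_zero RatFunc.X_ne_zero ?_
  simpa [← RatFunc.algebraMap_X] using
    RatFunc.algebraMap_ne_zero (Polynomial.X_sub_C_ne_zero (1 : F))

theorem a_xi_f_pow_p_pow_mod_scalars_general {Fq : Type*} [Field Fq]
    (p : ℕ) [Fact p.Prime] (hp : p ≠ 2) [CharP Fq p]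
    (c : Fq) (hc : ¬ IsSquare c) (k : ℕ) (x y : Fq) :
    let K := RatFunc Fq
    let t : K := RatFunc.X
    let cK : K := algebraMap Fq K c
    let Z : ℍ[K, cK, t * (t - 1)] := ⟨0, 1, 0, 0⟩
    let F : ℍ[K, cK, t * (t - 1)] := ⟨0, 0, 1, 0⟩
    -- ξ = x + y·Z ∈ F_q[Z], with norm N(ξ) = x² - c·y²
    let ξ : ℍ[K, cK, t * (t - 1)] :=
      algebraMap K _ (algebraMap Fq K x) + algebraMap K _ (algebraMap Fq K y) * Z
    -- ξ' = (-c)^((1-p^k)/2) · N(ξ)^((p^k-1)/2) · ξ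
    let s : Fq := ((-c) ^ ((p ^ k - 1) / 2))⁻¹ * (x ^ 2 - c * y ^ 2) ^ ((p ^ k - 1) / 2)
    let ξ' : ℍ[K, cK, t * (t - 1)] := algebraMap K _ (algebraMap Fq K s) * ξ
    ∀ f : K, f ≠ 0 →
      let g : K := f ^ (p ^ k) / (t * (t - 1)) ^ ((p ^ k - 1) / 2)
      ∃ u : K, u ≠ 0 ∧
        algebraMap K ℍ[K, cK, t * (t - 1)] u
            * (algebraMap K ℍ[K, cK, t * (t - 1)] (cK * g) + ξ' * (F * Z))
          = (algebraMap K ℍ[K, cK, t * (t - 1)] (cK * f) + ξ * (F * Z)) ^ (p ^ k) := by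
  intro K t cK Z F ξ s ξ' f _ g
  set m := (p ^ k - 1) / 2
  have hpk : p ^ k = 2 * m + 1 := by
    obtain ⟨j, hj⟩ := ((Fact.out : p.Prime).odd_of_ne_two hp).pow (n := k)
    omega
  have hcK : cK ≠ 0 := (map_ne_zero _).2 <| by rintro rfl; exact hc ⟨0, by simp⟩
  have : CharP K p := charP_of_injective_algebraMap' Fq p
  have : CharP ℍ[K, cK, t * (t - 1)] p := charP_of_injective_algebraMap' K p
  set u := cK ^ (2 * m) * (t * (t - 1)) ^ m
  have hug : u * (cK * g) = (cK * f) ^ p ^ k := by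
    simp only [u, g, hpk, Nat.add_sub_cancel, Nat.mul_div_cancel_left m two_pos]
    exact pow_two_mul_mul_pow_mul_mul_div_pow _ _ RatFunc.X_mul_X_sub_one_ne_zero m
  have hus : u * algebraMap Fq K s
      = (-(cK * (t * (t - 1)) * (algebraMap Fq K x ^ 2 - cK * algebraMap Fq K y ^ 2))) ^ m := by
    simp only [u, s, map_mul, map_inv₀, map_pow, map_neg, map_sub]
    exact pow_two_mul_mul_pow_mul_inv_neg_pow_mul_pow _ _ _ m
  refine ⟨u, mul_ne_zero (pow_ne_zero _ hcK) (pow_ne_zero _ RatFunc.X_mul_X_sub_one_ne_zero),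
    ?_⟩
  rw [add_pow_char_pow_of_mul_self_eq_algebraMap p hpk _
      (QuaternionAlgebra.mul_self_algebraMap_add_algebraMap_mul_i_mul_ji _ _),
    show ξ' * (F * Z) = _ * (ξ * (F * Z)) from mul_assoc _ _ _, mul_add, ← mul_assoc,
    ← map_mul, ← map_mul, hug, hus]

theorem a_xi_f_pow_p_pow_mod_scalars {Fq : Type*} [Field Fq] [Fintype Fq]
    (p : ℕ) [Fact p.Prime] (hp : p ≠ 2) [CharP Fq p]
    (c : Fq) (hc : ¬ IsSquare c) (k : ℕ) (hk : 1 ≤ k) (x y : Fq) :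
    let K := RatFunc Fq
    let t : K := RatFunc.X
    let cK : K := algebraMap Fq K c
    let Z : ℍ[K, cK, t * (t - 1)] := ⟨0, 1, 0, 0⟩
    let F : ℍ[K, cK, t * (t - 1)] := ⟨0, 0, 1, 0⟩
    -- ξ = x + y·Z ∈ F_q[Z], with norm N(ξ) = x² - c·y²
    let ξ : ℍ[K, cK, t * (t - 1)] :=
      algebraMap K _ (algebraMap Fq K x) + algebraMap K _ (algebraMap Fq K y) * Z
    -- ξ' = (-c)^((1-p^k)/2) · N(ξ)^((p^k-1)/2) · ξ
    let s : Fq := ((-c) ^ ((p ^ k - 1) / 2))⁻¹ * (x ^ 2 - c * y ^ 2) ^ ((p ^ k - 1) / 2)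
    let ξ' : ℍ[K, cK, t * (t - 1)] := algebraMap K _ (algebraMap Fq K s) * ξ
    ∀ f : K, f ≠ 0 →
      let g : K := f ^ (p ^ k) / (t * (t - 1)) ^ ((p ^ k - 1) / 2)
      ∃ u : K, u ≠ 0 ∧
        algebraMap K ℍ[K, cK, t * (t - 1)] u
            * (algebraMap K ℍ[K, cK, t * (t - 1)] (cK * g) + ξ' * (F * Z))
          = (algebraMap K ℍ[K, cK, t * (t - 1)] (cK * f) + ξ * (F * Z)) ^ (p ^ k) :=
  a_xi_f_pow_p_pow_mod_scalars_general p hp c hc k x y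
end

section
/- Define σ_k(ξ) = (−c)^((1−p^k)/2)·N(ξ)^((p^k−1)/2)·ξ on F_{q²}. If η ∈ F_{q²} satisfies N(η) = cτ/(1−τ) for τ ∈ F_q* with τ ≠ 1, then σ_k(η) = (τ/(τ−1))^((p^k−1)/2)·η and N(σ_k(η)) = c·τ^(p^k)/(1 − τ^(p^k)). -/
/-!
Since `N(η) = cτ/(1-τ)` lies in `F_q`, the scalar `(-c)^{-m} N(η)^m` with `m = (p^k-1)/2` equals
`(N(η)/(-c))^m = (τ/(τ-1))^m`. Norms of elements of `F_q` are squares, so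
`N(σ_k(η)) = (τ/(τ-1))^{p^k-1} · cτ/(1-τ)`, and the Frobenius identity
`(τ-1)^{p^k} = τ^{p^k} - 1` turns this into `cτ^{p^k}/(1-τ^{p^k})`.
-/

theorem FiniteField.algebraMap_pow_card_add_one {K L : Type*} [Field K] [Fintype K]
    [CommRing L] [Algebra K L] (a : K) :
    algebraMap K L a ^ (Fintype.card K + 1) = algebraMap K L (a ^ 2) := by
  rw [← map_pow, pow_succ, FiniteField.pow_card, sq]

theorem pow_div_two_sq_of_odd {M : Type*} [Monoid M] {n : ℕ} (hn : Odd n) (a : M) :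
    (a ^ ((n - 1) / 2)) ^ 2 = a ^ (n - 1) := by
  obtain ⟨t, rfl⟩ := hn
  rw [← pow_mul]
  congr 1
  omega

theorem div_neg_eq_div_sub_one {K : Type*} [Field K] {c τ : K} (hc : c ≠ 0) (hτ : τ ≠ 1) :
    c * τ / (1 - τ) / -c = τ / (τ - 1) := by
  have : τ - 1 ≠ 0 := sub_ne_zero.mpr hτ
  have : 1 - τ ≠ 0 := sub_ne_zero.mpr hτ.symm
  field_simp
  ring

theorem div_sub_one_pow_mul_eq_of_charP {K : Type*} [Field K] (p : ℕ) [Fact p.Prime]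
    [CharP K p] (k : ℕ) (c τ : K) :
    (τ / (τ - 1)) ^ (p ^ k - 1) * (c * τ / (1 - τ)) = c * τ ^ p ^ k / (1 - τ ^ p ^ k) := by
  obtain ⟨n, hn⟩ : ∃ n, p ^ k = n + 1 :=
    ⟨p ^ k - 1, (Nat.sub_add_cancel (pow_pos (Fact.out : p.Prime).pos k)).symm⟩
  have hfrob : 1 - τ ^ p ^ k = (τ - 1) ^ n * (1 - τ) := by
    rw [← neg_sub, ← one_pow (p ^ k), ← sub_pow_char_pow, one_pow, hn]
    ring
  rw [hfrob, hn, Nat.add_sub_cancel, div_pow, div_mul_div_comm]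
  ring

theorem sigma_on_M_tau_general {Fq Fq2 : Type*} [Field Fq] [Fintype Fq]
    [Field Fq2] [Algebra Fq Fq2]
    (p : ℕ) [Fact p.Prime] (hp : p ≠ 2) [CharP Fq p]
    (c : Fq) (hc : ¬ IsSquare c) (τ : Fq) (hτ1 : τ ≠ 1)
    (k : ℕ)
    (η : Fq2) (hη : η ^ (Fintype.card Fq + 1) = algebraMap Fq Fq2 (c * τ / (1 - τ))) :
    -- σ_k(η) = (-c)^((1-p^k)/2) · N(η)^((p^k-1)/2) · η
    let σeste : Fq2 := algebraMap Fq Fq2 (((-c) ^ ((p ^ k - 1) / 2))⁻¹)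
        * (η ^ (Fintype.card Fq + 1)) ^ ((p ^ k - 1) / 2) * η
    σeste = algebraMap Fq Fq2 ((τ / (τ - 1)) ^ ((p ^ k - 1) / 2)) * η ∧
      σeste ^ (Fintype.card Fq + 1)
        = algebraMap Fq Fq2 (c * τ ^ (p ^ k) / (1 - τ ^ (p ^ k))) := by
  intro σeste
  have hc0 : c ≠ 0 := fun h => hc (h ▸ IsSquare.zero)
  have hσ : σeste = algebraMap Fq Fq2 ((τ / (τ - 1)) ^ ((p ^ k - 1) / 2)) * η := by
    rw [← div_neg_eq_div_sub_one hc0 hτ1, div_pow, div_eq_inv_mul, map_mul,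
      map_pow _ _ ((p ^ k - 1) / 2), ← hη]
  refine ⟨hσ, ?_⟩
  have hodd : Odd (p ^ k) := ((Fact.out : p.Prime).odd_of_ne_two hp).pow
  rw [hσ, mul_pow, hη, FiniteField.algebraMap_pow_card_add_one, ← map_mul,
    pow_div_two_sq_of_odd hodd, div_sub_one_pow_mul_eq_of_charP]

theorem sigma_on_M_tau {Fq Fq2 : Type*} [Field Fq] [Fintype Fq]
    [Field Fq2] [Fintype Fq2] [Algebra Fq Fq2]
    (hcard : Fintype.card Fq2 = Fintype.card Fq ^ 2)
    (p : ℕ) [Fact p.Prime] (hp : p ≠ 2) [CharP Fq p]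
    (c : Fq) (hc : ¬ IsSquare c) (τ : Fq) (hτ0 : τ ≠ 0) (hτ1 : τ ≠ 1)
    (k : ℕ) (hk : 1 ≤ k)
    (η : Fq2) (hη : η ^ (Fintype.card Fq + 1) = algebraMap Fq Fq2 (c * τ / (1 - τ))) :
    -- σ_k(η) = (-c)^((1-p^k)/2) · N(η)^((p^k-1)/2) · η
    let σeste : Fq2 := algebraMap Fq Fq2 (((-c) ^ ((p ^ k - 1) / 2))⁻¹)
        * (η ^ (Fintype.card Fq + 1)) ^ ((p ^ k - 1) / 2) * η
    σeste = algebraMap Fq Fq2 ((τ / (τ - 1)) ^ ((p ^ k - 1) / 2)) * η ∧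
      σeste ^ (Fintype.card Fq + 1)
        = algebraMap Fq Fq2 (c * τ ^ (p ^ k) / (1 - τ ^ (p ^ k))) :=
  sigma_on_M_tau_general p hp c hc τ hτ1 k η hη
end

section
/- Let ξ, μ, η, λ ∈ F_{q²} with N(ξ) = N(μ) = −c and N(η) = N(λ) = cτ/(1−τ) (c a non-square in F_q*, τ ∈ F_q* \ {1}) satisfy ξη̄ = λμ̄ and ξ + η = λ + μ. Then λ = η̄ if and only if μ = ξ̄. -/
/-! Conjugation `x ↦ x ^ q` is an involution of `F_{q²}`, so substituting either side of the
equivalence into `ξ η̄ = λ μ̄` leaves an equation that cancels by the nonzero factor `η̄` or `ξ`. -/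

theorem FiniteField.pow_pow_of_card_eq_sq {F : Type*} [Field F] [Fintype F] {q : ℕ}
    (hcard : Fintype.card F = q ^ 2) (x : F) : (x ^ q) ^ q = x := by
  rw [← pow_mul, ← sq, ← hcard, FiniteField.pow_card]

theorem Function.Involutive.eq_apply_iff_eq_apply_of_mul_eq {M : Type*}
    [CommMonoidWithZero M] [IsCancelMulZero M] {σ : M → M} (hσ : Function.Involutive σ) {ξ μ η lam : M}
    (hξ : ξ ≠ 0) (hη : σ η ≠ 0) (h : ξ * σ η = lam * σ μ) :
    lam = σ η ↔ μ = σ ξ := by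
  constructor
  · rintro rfl
    have : ξ = σ μ := mul_right_cancel₀ hη (h.trans (mul_comm _ _))
    rw [this, hσ]
  · rintro rfl
    rw [hσ, mul_comm lam] at h
    exact (mul_left_cancel₀ hξ h).symm

theorem ne_zero_of_pow_eq_algebraMap {K F : Type*} [Field K] [Ring F] [Nontrivial F]
    [Algebra K F] {x : F} {n : ℕ} {a : K} (hn : n ≠ 0) (ha : a ≠ 0)
    (hx : x ^ n = algebraMap K F a) : x ≠ 0 :=
  ne_zero_pow hn (hx ▸ (map_ne_zero _).mpr ha)

theorem lambda_eq_conj_eta_iff_mu_eq_conj_xi_general {Fq F : Type*} [Field Fq]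
    [Field F] [Fintype F] [Algebra Fq F]
    (q : ℕ)
    (hcard : Fintype.card F = q ^ 2)
    (c : Fq) (hc : ¬ IsSquare c) (τ : Fq) (hτ0 : τ ≠ 0) (hτ1 : τ ≠ 1)
    (ξ μ η lam : F)
    (hξ : ξ ^ (q + 1) = algebraMap Fq F (-c))
    (hη : η ^ (q + 1) = algebraMap Fq F (c * τ / (1 - τ)))
    (h1 : ξ * η ^ q = lam * μ ^ q) :
    lam = η ^ q ↔ μ = ξ ^ q := by
  have hc0 : c ≠ 0 := by rintro rfl; exact hc IsSquare.zero
  have hξ0 : ξ ≠ 0 := ne_zero_of_pow_eq_algebraMap q.succ_ne_zero (neg_ne_zero.mpr hc0) hξ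
  have hη0 : η ≠ 0 := ne_zero_of_pow_eq_algebraMap q.succ_ne_zero
    (div_ne_zero (mul_ne_zero hc0 hτ0) (sub_ne_zero.mpr hτ1.symm)) hη
  have hconj : Function.Involutive (· ^ q : F → F) := FiniteField.pow_pow_of_card_eq_sq hcard
  exact hconj.eq_apply_iff_eq_apply_of_mul_eq hξ0 (pow_ne_zero q hη0) h1

theorem lambda_eq_conj_eta_iff_mu_eq_conj_xi {Fq F : Type*} [Field Fq] [Fintype Fq]
    [Field F] [Fintype F] [Algebra Fq F]
    (q : ℕ) (hq : q = Fintype.card Fq) (hodd : Odd q)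
    (hcard : Fintype.card F = q ^ 2)
    (c : Fq) (hc : ¬ IsSquare c) (τ : Fq) (hτ0 : τ ≠ 0) (hτ1 : τ ≠ 1)
    (ξ μ η lam : F)
    (hξ : ξ ^ (q + 1) = algebraMap Fq F (-c))
    (hμ : μ ^ (q + 1) = algebraMap Fq F (-c))
    (hη : η ^ (q + 1) = algebraMap Fq F (c * τ / (1 - τ)))
    (hlam : lam ^ (q + 1) = algebraMap Fq F (c * τ / (1 - τ)))
    (h1 : ξ * η ^ q = lam * μ ^ q) (h2 : ξ + η = lam + μ) :
    lam = η ^ q ↔ μ = ξ ^ q :=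
  lambda_eq_conj_eta_iff_mu_eq_conj_xi_general q hcard c hc τ hτ0 hτ1 ξ μ η lam hξ hη h1
end

section
/- Let ξ, μ, χ ∈ F_{q²} with N(ξ) = N(μ) = N(χ) = −c and η, λ ∈ F_{q²} with N(η) = N(λ) = cτ/(1−τ), satisfying the four equations ξ + η = λ + μ, μ + η = λ + χ, ξη̄ = λμ̄, μη̄ = λχ̄. Then λ = η and ξ = μ = χ. -/
/-!
Write `x̄ = x ^ q`. Multiplying `ξ η̄ = λ μ̄` by `χ̄` and substituting `λ χ̄ = μ η̄` gives
`ξ η̄ χ̄ = N(μ) η̄ = N(ξ) η̄ = ξ ξ̄ η̄`, so `χ̄ = ξ̄` and hence `χ = ξ` (when `η ≠ 0`).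
Subtracting the two linear relations then gives `2 (ξ - μ) = 0`. If `η = 0`, instead
`λ μ̄ = 0` forces `λ = 0`.
-/

theorem FiniteField.pow_injective_of_card_eq_sq {F : Type*} [Field F] [Fintype F] {q : ℕ}
    (hcard : Fintype.card F = q ^ 2) : Function.Injective (fun x : F ↦ x ^ q) := by
  have hinv (x : F) : (x ^ q) ^ q = x := by
    rw [← pow_mul, ← sq, ← hcard, FiniteField.pow_card]
  exact Function.LeftInverse.injective hinv

theorem FiniteField.two_ne_zero_of_odd_card {F : Type*} [Field F] [Fintype F]
    (hodd : Odd (Fintype.card F)) : (2 : F) ≠ 0 := by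
  refine Ring.two_ne_zero fun h ↦ ?_
  have := FiniteField.even_card_iff_char_two.mp h
  rw [Nat.odd_iff] at hodd
  omega

section FourRelations

variable {F : Type*} [Field F] {q : ℕ} {ξ μ χ η lam : F}

theorem pow_eq_pow_of_mul_pow_eq (hN : μ ^ (q + 1) = ξ ^ (q + 1)) (hξ : ξ ≠ 0) (hη : η ≠ 0)
    (e3 : ξ * η ^ q = lam * μ ^ q) (e4 : μ * η ^ q = lam * χ ^ q) : χ ^ q = ξ ^ q := by
  refine mul_left_cancel₀ (mul_ne_zero hξ (pow_ne_zero q hη)) ?_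
  calc ξ * η ^ q * χ ^ q = μ * η ^ q * μ ^ q := by rw [e3, e4]; ring
    _ = ξ * η ^ q * ξ ^ q := by linear_combination η ^ q * hN

theorem eq_and_eq_of_add_eq_add (h2 : (2 : F) ≠ 0)
    (e1 : ξ + η = lam + μ) (e2 : μ + η = lam + χ) (hχ : χ = ξ) : lam = η ∧ ξ = μ ∧ μ = χ := by
  have hξμ : ξ = μ := mul_left_cancel₀ h2 (by linear_combination e1 - e2 - hχ)
  exact ⟨by linear_combination hξμ - e1, hξμ, by rw [hχ, hξμ]⟩

theorem eq_and_eq_of_norm_eq (hinj : Function.Injective (fun x : F ↦ x ^ q)) (h2 : (2 : F) ≠ 0)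
    (hN : μ ^ (q + 1) = ξ ^ (q + 1)) (hμ : μ ≠ 0)
    (e1 : ξ + η = lam + μ) (e2 : μ + η = lam + χ)
    (e3 : ξ * η ^ q = lam * μ ^ q) (e4 : μ * η ^ q = lam * χ ^ q) :
    lam = η ∧ ξ = μ ∧ μ = χ := by
  rcases eq_or_ne η 0 with rfl | hη
  · have hq : q ≠ 0 := by
      rintro rfl
      exact zero_ne_one (hinj (by simp))
    have hlam : lam = 0 := by
      simpa [zero_pow hq, hμ] using e3.symm
    subst hlam
    exact ⟨rfl, by simpa using e1, by simpa using e2⟩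
  · have hξ : ξ ≠ 0 := fun h ↦ pow_ne_zero (q + 1) hμ (by rw [hN, h, zero_pow q.succ_ne_zero])
    exact eq_and_eq_of_add_eq_add h2 e1 e2 (hinj (pow_eq_pow_of_mul_pow_eq hN hξ hη e3 e4))

end FourRelations

theorem lambda_eq_eta_and_xi_eq_mu_eq_chi_general {Fq F : Type*} [Field Fq]
    [Field F] [Fintype F] [Algebra Fq F]
    (q : ℕ) (hodd : Odd q)
    (hcard : Fintype.card F = q ^ 2)
    (c : Fq) (hc : ¬ IsSquare c)
    (ξ μ χ η lam : F)
    (hξ : ξ ^ (q + 1) = algebraMap Fq F (-c))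
    (hμ : μ ^ (q + 1) = algebraMap Fq F (-c))
    (e1 : ξ + η = lam + μ) (e2 : μ + η = lam + χ)
    (e3 : ξ * η ^ q = lam * μ ^ q) (e4 : μ * η ^ q = lam * χ ^ q) :
    lam = η ∧ ξ = μ ∧ μ = χ := by
  have hc0 : c ≠ 0 := by rintro rfl; exact hc ⟨0, by ring⟩
  have hμ0 : μ ≠ 0 := by
    rintro rfl
    simp [zero_pow q.succ_ne_zero, hc0] at hμ
  have h2 : (2 : F) ≠ 0 :=
    FiniteField.two_ne_zero_of_odd_card (hcard ▸ hodd.pow)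
  exact eq_and_eq_of_norm_eq (FiniteField.pow_injective_of_card_eq_sq hcard) h2
    (hμ.trans hξ.symm) hμ0 e1 e2 e3 e4

theorem lambda_eq_eta_and_xi_eq_mu_eq_chi {Fq F : Type*} [Field Fq] [Fintype Fq]
    [Field F] [Fintype F] [Algebra Fq F]
    (q : ℕ) (hq : q = Fintype.card Fq) (hodd : Odd q)
    (hcard : Fintype.card F = q ^ 2)
    (c : Fq) (hc : ¬ IsSquare c) (τ : Fq) (hτ0 : τ ≠ 0) (hτ1 : τ ≠ 1)
    (ξ μ χ η lam : F)
    (hξ : ξ ^ (q + 1) = algebraMap Fq F (-c))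
    (hμ : μ ^ (q + 1) = algebraMap Fq F (-c))
    (hχ : χ ^ (q + 1) = algebraMap Fq F (-c))
    (hη : η ^ (q + 1) = algebraMap Fq F (c * τ / (1 - τ)))
    (hlam : lam ^ (q + 1) = algebraMap Fq F (c * τ / (1 - τ)))
    (e1 : ξ + η = lam + μ) (e2 : μ + η = lam + χ)
    (e3 : ξ * η ^ q = lam * μ ^ q) (e4 : μ * η ^ q = lam * χ ^ q) :
    lam = η ∧ ξ = μ ∧ μ = χ :=
  lambda_eq_eta_and_xi_eq_mu_eq_chi_general q hodd hcard c hc ξ μ χ η lam hξ hμ e1 e2 e3 e4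
end

section
/- In the group Γ₃ = ⟨a,b,x,y | ax = x⁻¹b, ay = y⁻¹b⁻¹, ay⁻¹ = xa⁻¹, bx = yb⁻¹⟩, the assignment a ↦ a³, b ↦ b³, x ↦ x⁻³, y ↦ y⁻³ extends to a group endomorphism of Γ₃ (i.e., the images satisfy the four defining relations). -/
namespace Gamma3

/-- generators: 0 ↦ a, 1 ↦ b, 2 ↦ x, 3 ↦ y -/
def a' : FreeGroup (Fin 4) := FreeGroup.of 0
def b' : FreeGroup (Fin 4) := FreeGroup.of 1
def x' : FreeGroup (Fin 4) := FreeGroup.of 2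
def y' : FreeGroup (Fin 4) := FreeGroup.of 3

/-- Relators of Γ₃ = ⟨a,b,x,y | ax = x⁻¹b, ay = y⁻¹b⁻¹, ay⁻¹ = xa⁻¹, bx = yb⁻¹⟩. -/
def rels : Set (FreeGroup (Fin 4)) :=
  { a' * x' * (x'⁻¹ * b')⁻¹,
    a' * y' * (y'⁻¹ * b'⁻¹)⁻¹,
    a' * y'⁻¹ * (x' * a'⁻¹)⁻¹,
    b' * x' * (y' * b'⁻¹)⁻¹ }

/-- The group Γ₃. -/
def Gamma3 := PresentedGroup rels

instance : Group Gamma3 := by unfold Gamma3; infer_instance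

def a : Gamma3 := PresentedGroup.of 0
def b : Gamma3 := PresentedGroup.of 1
def x : Gamma3 := PresentedGroup.of 2
def y : Gamma3 := PresentedGroup.of 3

end Gamma3

section Exchange

variable {G : Type*} [Group G] {u v v' u' : G}

/- The square `u * v = v' * u'` can be read as a rule moving a letter leftwards past another
in four ways, one for each corner; the tail `w` lets the rules fire inside longer words. -/
theorem exchange_of_mul_eq_mul (h : u * v = v' * u') :
    (∀ w, u * (v * w) = v' * (u' * w)) ∧ (∀ w, u' * (v⁻¹ * w) = v'⁻¹ * (u * w)) ∧
      (∀ w, u'⁻¹ * (v'⁻¹ * w) = v⁻¹ * (u⁻¹ * w)) ∧ (∀ w, u⁻¹ * (v' * w) = v * (u'⁻¹ * w)) := by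
  have h' : u' * v⁻¹ = v'⁻¹ * u := by
    rw [mul_inv_eq_iff_eq_mul, mul_assoc, h, inv_mul_cancel_left]
  have h'' : u⁻¹ * v' = v * u'⁻¹ := by
    rw [inv_mul_eq_iff_eq_mul, ← mul_assoc, h, mul_inv_cancel_right]
  refine ⟨fun w ↦ ?_, fun w ↦ ?_, fun w ↦ ?_, fun w ↦ ?_⟩ <;>
    simp only [← mul_assoc, h, h', h'', ← mul_inv_rev]

theorem mul_eq_mul_of_forall_mul_mul (h : ∀ w, u * (v * w) = v' * (u' * w)) :
    u * v = v' * u' := by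
  simpa using h 1

end Exchange

structure Gamma3.Relations {G : Type*} [Group G] (a b x y : G) : Prop where
  a_mul_x : a * x = x⁻¹ * b
  a_mul_y : a * y = y⁻¹ * b⁻¹
  a_mul_y_inv : a * y⁻¹ = x * a⁻¹
  b_mul_x : b * x = y * b⁻¹

/- Each of `a, b, a⁻¹, b⁻¹` meets each of `x, y, x⁻¹, y⁻¹` in exactly one of the sixteen
squares obtained from the four relations. Using them as rules that move `x`- and `y`-letters to
the left brings both sides of every cubed relation to the same normal form. -/
theorem Gamma3.Relations.cube {G : Type*} [Group G] {a b x y : G} (h : Relations a b x y) :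
    Relations (a ^ 3) (b ^ 3) (x⁻¹ ^ 3) (y⁻¹ ^ 3) := by
  obtain ⟨s₁, s₂, s₃, s₄⟩ := exchange_of_mul_eq_mul h.a_mul_x
  obtain ⟨t₁, -, t₃, t₄⟩ := exchange_of_mul_eq_mul h.a_mul_y
  obtain ⟨u₁, -, u₃, u₄⟩ := exchange_of_mul_eq_mul h.a_mul_y_inv
  obtain ⟨v₁, v₂, v₃, v₄⟩ := exchange_of_mul_eq_mul h.b_mul_x
  simp only [inv_inv] at s₂ s₃ s₄ t₃ t₄ u₃ u₄ v₂ v₃ v₄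
  constructor <;> refine mul_eq_mul_of_forall_mul_mul fun w ↦ ?_ <;>
    simp only [← inv_pow, inv_inv] <;>
    simp only [pow_succ, pow_zero, one_mul, mul_assoc, s₁, s₂, s₃, s₄, t₁, t₃, t₄, u₁, u₃, u₄,
      v₁, v₂, v₃, v₄]

namespace Gamma3

theorem forall_rels_map_eq_one_iff {G : Type*} [Group G] (φ : FreeGroup (Fin 4) →* G) :
    (∀ r ∈ rels, φ r = 1) ↔ Relations (φ a') (φ b') (φ x') (φ y') := by
  simp only [rels, Set.mem_insert_iff, Set.mem_singleton_iff, forall_eq_or_imp, forall_eq,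
    map_mul, map_inv, mul_inv_eq_one]
  exact ⟨fun ⟨h₁, h₂, h₃, h₄⟩ ↦ ⟨h₁, h₂, h₃, h₄⟩, fun ⟨h₁, h₂, h₃, h₄⟩ ↦ ⟨h₁, h₂, h₃, h₄⟩⟩

theorem relations_generators : Relations a b x y :=
  (forall_rels_map_eq_one_iff (PresentedGroup.mk rels)).mp fun _ ↦ PresentedGroup.one_of_mem

theorem Relations.exists_hom {G : Type*} [Group G] {a₁ b₁ x₁ y₁ : G}
    (h : Relations a₁ b₁ x₁ y₁) :
    ∃ φ : Gamma3 →* G, φ a = a₁ ∧ φ b = b₁ ∧ φ x = x₁ ∧ φ y = y₁ := by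
  have hrels : ∀ r ∈ rels, FreeGroup.lift ![a₁, b₁, x₁, y₁] r = 1 :=
    (forall_rels_map_eq_one_iff _).mpr (by simpa [a', b', x', y'] using h)
  exact ⟨PresentedGroup.toGroup hrels, PresentedGroup.toGroup.of hrels,
    PresentedGroup.toGroup.of hrels, PresentedGroup.toGroup.of hrels,
    PresentedGroup.toGroup.of hrels⟩

/-- The assignment a ↦ a³, b ↦ b³, x ↦ x⁻³, y ↦ y⁻³ extends to an endomorphism of Γ₃. -/
theorem power_endomorphism :
    ∃ φ : Gamma3 →* Gamma3,
      φ a = a ^ 3 ∧ φ b = b ^ 3 ∧ φ x = x⁻¹ ^ 3 ∧ φ y = y⁻¹ ^ 3 :=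
  relations_generators.cube.exists_hom

end Gamma3
end

section
/- In the group Γ₃ with presentation ⟨a,b,x,y | ax = x⁻¹b, ay = y⁻¹b⁻¹, ay⁻¹ = xa⁻¹, bx = yb⁻¹⟩, the relation a⁹x⁹ = x⁻⁹b⁹ holds. -/
theorem rotations_of_mul_eq_mul {G : Type*} [Group G] {h₁ v₁ v₂ h₂ : G}
    (H : h₁ * v₁ = v₂ * h₂) (g : G) :
    h₁ * (v₁ * g) = v₂ * (h₂ * g) ∧ h₂⁻¹ * (v₂⁻¹ * g) = v₁⁻¹ * (h₁⁻¹ * g) ∧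
      h₁⁻¹ * (v₂ * g) = v₁ * (h₂⁻¹ * g) ∧ h₂ * (v₁⁻¹ * g) = v₂⁻¹ * (h₁ * g) := by
  simp only [← mul_assoc, mul_left_inj]
  refine ⟨H, ?_, ?_, ?_⟩
  · rw [← mul_inv_rev, ← mul_inv_rev, H]
  · rw [inv_mul_eq_iff_eq_mul, ← mul_assoc, H, mul_inv_cancel_right]
  · rw [eq_inv_mul_iff_mul_eq, ← mul_assoc, ← H, mul_inv_cancel_right]

namespace Gamma3

structure SatisfiesRelations {G : Type*} [Group G] (a b x y : G) : Prop where
  ax : a * x = x⁻¹ * b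
  ay : a * y = y⁻¹ * b⁻¹
  ay_inv : a * y⁻¹ = x * a⁻¹
  bx : b * x = y * b⁻¹

theorem SatisfiesRelations.cube {G : Type*} [Group G] {a b x y : G}
    (h : SatisfiesRelations a b x y) :
    SatisfiesRelations (a ^ 3) (b ^ 3) (x⁻¹ ^ 3) (y⁻¹ ^ 3) := by
  have rules (g : G) := And.intro (rotations_of_mul_eq_mul h.ax g) <|
    And.intro (rotations_of_mul_eq_mul h.ay g) <|
    And.intro (rotations_of_mul_eq_mul h.ay_inv g) (rotations_of_mul_eq_mul h.bx g)
  simp only [inv_inv] at rules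
  constructor <;>
  · simp only [← inv_pow, inv_inv]
    -- with a trailing `* 1` every adjacent pair `h * v` has the shape `h * (v * g)`
    apply mul_right_cancel (b := (1 : G))
    simp only [pow_succ, pow_zero, mul_assoc, one_mul, rules]

theorem satisfiesRelations : SatisfiesRelations a b x y where
  ax := PresentedGroup.mk_eq_mk_of_mul_inv_mem (x := a' * x') (y := x'⁻¹ * b') (by simp [rels])
  ay := PresentedGroup.mk_eq_mk_of_mul_inv_mem (x := a' * y') (y := y'⁻¹ * b'⁻¹) (by simp [rels])
  ay_inv :=
    PresentedGroup.mk_eq_mk_of_mul_inv_mem (x := a' * y'⁻¹) (y := x' * a'⁻¹) (by simp [rels])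
  bx := PresentedGroup.mk_eq_mk_of_mul_inv_mem (x := b' * x') (y := y' * b'⁻¹) (by simp [rels])

/-- The relation a⁹x⁹ = x⁻⁹b⁹ holds in Γ₃. -/
theorem a9x9 : a ^ 9 * x ^ 9 = x⁻¹ ^ 9 * b ^ 9 := by
  simpa only [← pow_mul, inv_pow, inv_inv] using satisfiesRelations.cube.cube.ax

end Gamma3
end
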